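/- Let n ≥ n_min := max{⌈deg(f)/2⌉, max_{j=1,…,m+1} d_j} and let φ* be a linear functional feasible at order n that attains the infimum, i.e., φ*(f) = ρ_n. If f(φ*(x)) ≤ ρ_n, then ρ_n = f* and the point x* := φ*(x) ∈ Ω is a global minimizer of f on Ω. -/

import Mathlib

/-!
The point `φ(x)` lies in `Ω` by a Jensen inequality for pseudo-expectations: if `G` is
SOS-concave and `φ` is nonnegative on squares of degree `≤ n`, then `φ(G) ≤ G(φ(x))`.
To see it, restrict `G` to the segment from `u = φ(x)` to the generic point `x`, a polynomial in
`t` with coefficients in `ℝ[x]`, and apply `φ` to the coefficients. The resulting real polynomial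
`h` has `h(1) = φ(G)`, `h(0) = G(u)`, `h'(0) = φ(∇G(u) · (x - u)) = 0`, and
`h''(t) = -∑ₖ φ(qₖ(t)²) ≤ 0` where `qₖ` are the entries of `(x - u)ᵀ L` along the segment
(`-∇²G = L Lᵀ`); concavity gives `h(1) ≤ h(0) + h'(0)`. Since `φ(gⱼ) ≥ 0`, `gⱼ(φ(x)) ≥ 0`.

Evaluations at points of `Ω` are feasible, so `ρₙ ≤ f(y)` on `Ω`; for this `ρₙ` must be a genuine
infimum, which holds because the ball constraint bounds all pseudo-moments,
`|φ(x^α)| ≤ 1` for `|α| ≤ 2n`. Hence `ρₙ ≤ f* ≤ f(φ(x)) ≤ ρₙ`.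
-/

open MvPolynomial Finset

noncomputable section

/-- The Hessian of a polynomial, as a matrix with polynomial entries. -/
def polyHessian {d : ℕ} (p : MvPolynomial (Fin d) ℝ) :
    Matrix (Fin d) (Fin d) (MvPolynomial (Fin d) ℝ) :=
  Matrix.of fun i j => pderiv i (pderiv j p)

/-- A polynomial is a sum of squares (SOS). -/
def IsSOS {σ : Type} (p : MvPolynomial σ ℝ) : Prop :=
  ∃ (s : ℕ) (q : Fin s → MvPolynomial σ ℝ), p = ∑ k, q k ^ 2

/-- A polynomial `g` is SOS-concave: `-∇²g = L Lᵀ` for some polynomial matrix `L`. -/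
def IsSOSConcave {d : ℕ} (g : MvPolynomial (Fin d) ℝ) : Prop :=
  ∃ (r : ℕ) (L : Matrix (Fin d) (Fin r) (MvPolynomial (Fin d) ℝ)),
    -polyHessian g = L * L.transpose

/-- Standing assumptions: `g 0 = 1`, the last constraint is `1 - ‖x‖²`,
and every `g j`, `j = 1,…,m+1`, is SOS-concave. -/
def GoodConstraints {d m : ℕ} (g : Fin (m + 2) → MvPolynomial (Fin d) ℝ) : Prop :=
  g 0 = 1 ∧ g (Fin.last (m + 1)) = 1 - ∑ i : Fin d, X i ^ 2 ∧
    ∀ j : Fin (m + 2), j ≠ 0 → IsSOSConcave (g j)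

/-- The feasible set `Ω = {x : g j (x) ≥ 0 ∀ j}` (the condition for `j = 0` is vacuous
since `g 0 = 1`). -/
def OmegaSet {d m : ℕ} (g : Fin (m + 2) → MvPolynomial (Fin d) ℝ) : Set (Fin d → ℝ) :=
  {x | ∀ j : Fin (m + 2), 0 ≤ eval x (g j)}

/-- `⌈deg p / 2⌉`. -/
def degHalf {d : ℕ} (p : MvPolynomial (Fin d) ℝ) : ℕ := (p.totalDegree + 1) / 2

/-- A linear functional on polynomials (its values on degrees ≤ 2n are the only ones
constrained) is feasible at order `n` if `φ(1) = 1` and `φ(p² gⱼ) ≥ 0` for all `j`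
and all `p` with `deg p ≤ n - dⱼ`. -/
def Feasible {d m : ℕ} (g : Fin (m + 2) → MvPolynomial (Fin d) ℝ) (n : ℕ)
    (φ : MvPolynomial (Fin d) ℝ →ₗ[ℝ] ℝ) : Prop :=
  φ 1 = 1 ∧ ∀ j : Fin (m + 2), ∀ p : MvPolynomial (Fin d) ℝ,
    p.totalDegree ≤ n - degHalf (g j) → 0 ≤ φ (p ^ 2 * g j)

/-- The point `φ(x) = (φ(x₁),…,φ(x_d))`. -/
def phiPoint {d : ℕ} (φ : MvPolynomial (Fin d) ℝ →ₗ[ℝ] ℝ) : Fin d → ℝ :=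
  fun i => φ (X i)

/-- `f` is strongly convex on `S`: `∇²f(x) - μI ⪰ 0` on `S` for some `μ > 0`. -/
def StronglyConvexOnSet {d : ℕ} (f : MvPolynomial (Fin d) ℝ) (S : Set (Fin d → ℝ)) : Prop :=
  ∃ μ : ℝ, 0 < μ ∧ ∀ x ∈ S,
    Matrix.PosSemidef ((polyHessian f).map (fun p => eval x p)
      - μ • (1 : Matrix (Fin d) (Fin d) ℝ))

/-- `f` is SOS-convex on `Ω`: `∇²f = Σⱼ gⱼ · Lⱼ Lⱼᵀ`. -/
def IsSOSConvexOnOmega {d m : ℕ} (g : Fin (m + 2) → MvPolynomial (Fin d) ℝ)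
    (f : MvPolynomial (Fin d) ℝ) : Prop :=
  ∃ (r : Fin (m + 2) → ℕ)
    (L : ∀ j, Matrix (Fin d) (Fin (r j)) (MvPolynomial (Fin d) ℝ)),
    polyHessian f = ∑ j, g j • (L j * (L j).transpose)

/-- `n_min = max{⌈deg f/2⌉, max_{j=1,…,m+1} dⱼ}`. -/
def nMin {d m : ℕ} (g : Fin (m + 2) → MvPolynomial (Fin d) ℝ)
    (f : MvPolynomial (Fin d) ℝ) : ℕ :=
  max (degHalf f) (((univ : Finset (Fin (m + 2))).erase 0).sup fun j => degHalf (g j))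

/-- `ρₙ = inf {φ(f) : φ feasible at order n}`. -/
def rho {d m : ℕ} (g : Fin (m + 2) → MvPolynomial (Fin d) ℝ)
    (f : MvPolynomial (Fin d) ℝ) (n : ℕ) : ℝ :=
  sInf {r : ℝ | ∃ φ : MvPolynomial (Fin d) ℝ →ₗ[ℝ] ℝ, Feasible g n φ ∧ φ f = r}

/-- `f* = min_{x ∈ Ω} f(x)`. -/
def fstar {d m : ℕ} (g : Fin (m + 2) → MvPolynomial (Fin d) ℝ)
    (f : MvPolynomial (Fin d) ℝ) : ℝ :=
  sInf ((fun x => eval x f) '' OmegaSet g)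

namespace MvPolynomial

variable {σ R : Type*}

section Degree

variable [CommSemiring R]

theorem totalDegree_pderiv_lt {i : σ} {p : MvPolynomial σ R} (h : pderiv i p ≠ 0) :
    (pderiv i p).totalDegree < p.totalDegree := by
  classical
  obtain ⟨α, hα, hdeg⟩ := Finset.exists_mem_eq_sup _ (support_nonempty.mpr h)
    fun s : σ →₀ ℕ => s.sum fun _ e => e
  have hsucc : α + Finsupp.single i 1 ∈ p.support := by
    rw [mem_support_iff, coeff_pderiv] at hα
    exact mem_support_iff.mpr (left_ne_zero_of_mul hα)
  calc (pderiv i p).totalDegree = α.sum fun _ e => e := hdeg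
    _ < (α + Finsupp.single i 1).sum fun _ e => e := by
      rw [Finsupp.sum_add_index' (fun _ => rfl) fun _ _ _ => rfl, Finsupp.sum_single_index rfl]
      omega
    _ ≤ p.totalDegree := le_totalDegree hsucc

theorem totalDegree_aeval_le_of_totalDegree_le_one {τ : Type*} (g : σ → MvPolynomial τ R)
    (hg : ∀ i, (g i).totalDegree ≤ 1) (p : MvPolynomial σ R) :
    (aeval g p).totalDegree ≤ p.totalDegree := by
  conv_lhs => rw [p.as_sum, map_sum]
  refine totalDegree_finsetSum_le fun α hα => ?_
  rw [aeval_monomial, algebraMap_eq]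
  refine (totalDegree_mul _ _).trans ?_
  rw [totalDegree_C, zero_add]
  refine (totalDegree_finsetProd _ _).trans ((Finset.sum_le_sum fun i _ => ?_).trans
    (le_totalDegree hα))
  exact (totalDegree_pow _ _).trans (by simpa using Nat.mul_le_mul_left (α i) (hg i))

theorem exists_list_monomial_one_eq_prod_map_X (α : σ →₀ ℕ) :
    ∃ l : List σ, l.length = α.degree ∧ (monomial α 1 : MvPolynomial σ R) = (l.map X).prod := by
  induction α using Finsupp.induction with
  | zero => exact ⟨[], by simp, by simp⟩
  | single_add i k α _ _ ih =>
    obtain ⟨l, hlen, hl⟩ := ih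
    refine ⟨List.replicate k i ++ l, by simp [hlen], ?_⟩
    rw [List.map_append, List.prod_append, ← hl, List.map_replicate, List.prod_replicate,
      X_pow_eq_monomial, monomial_mul, one_mul]

theorem totalDegree_prod_map_X_le [Nontrivial R] (l : List σ) :
    ((l.map X).prod : MvPolynomial σ R).totalDegree ≤ l.length := by
  induction l with
  | nil => simp
  | cons i l ih =>
    rw [List.map_cons, List.prod_cons, List.length_cons]
    exact (totalDegree_mul _ _).trans (by rw [totalDegree_X]; omega)

end Degree

theorem eq_zero_of_sum_sq_eq_zero {ι : Type*} [Fintype ι] {q : ι → MvPolynomial σ ℝ}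
    (h : ∑ k, q k ^ 2 = 0) (k : ι) : q k = 0 := by
  refine funext fun x => ?_
  have hx : ∑ j, eval x (q j) ^ 2 = 0 := by simpa using congrArg (eval x) h
  simpa using (Finset.sum_eq_zero_iff_of_nonneg fun j _ => sq_nonneg _).mp hx k (mem_univ k)

open MonomialOrder in
theorem two_mul_totalDegree_le_totalDegree_sum_sq [LinearOrder σ] [WellFoundedGT σ]
    {ι : Type*} {s : Finset ι} (q : ι → MvPolynomial σ ℝ) {k : ι} (hk : k ∈ s) :
    2 * (q k).totalDegree ≤ (∑ j ∈ s, q j ^ 2).totalDegree := by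
  classical
  obtain ⟨k₀, hk₀, hmax⟩ :=
    s.exists_max_image (fun j => degLex.toSyn (degLex.degree (q j))) ⟨k, hk⟩
  set δ := degLex.degree (q k₀)
  have hle : (q k).totalDegree ≤ (q k₀).totalDegree := degLex_totalDegree_monotone (hmax k hk)
  rcases eq_or_ne (q k₀) 0 with h0 | h0
  · rw [h0, totalDegree_zero] at hle
    omega
  -- At the top degLex monomial `2 • δ` every square contributes a square of a leading
  -- coefficient or nothing, so there is no cancellation.
  have hcoeff : ∀ j ∈ s, 0 ≤ (q j ^ 2).coeff (2 • δ) := by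
    intro j hj
    rcases (hmax j hj).lt_or_eq with hlt | heq
    · refine (degLex.coeff_eq_zero_of_lt ((degLex.degree_pow_le 2).trans_lt ?_)).ge
      rw [map_nsmul, map_nsmul]
      exact nsmul_lt_nsmul_right two_ne_zero hlt
    · rw [← degLex.toSyn.injective heq, degLex.coeff_pow_nsmul_degree]
      positivity
  have hmem : 2 • δ ∈ (∑ j ∈ s, q j ^ 2).support := by
    rw [mem_support_iff, coeff_sum]
    refine (Finset.sum_pos' hcoeff ⟨k₀, hk₀, ?_⟩).ne'
    rw [degLex.coeff_pow_nsmul_degree]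
    have := degLex.leadingCoeff_ne_zero_iff.mpr h0
    positivity
  calc 2 * (q k).totalDegree ≤ (2 • δ).degree := by
        rw [map_nsmul, degree_degLexDegree, smul_eq_mul]; omega
    _ ≤ _ := le_totalDegree hmem

theorem totalDegree_one_sub_sum_X_sq_le [Fintype σ] :
    (1 - ∑ i, X i ^ 2 : MvPolynomial σ ℝ).totalDegree ≤ 2 :=
  (totalDegree_sub _ _).trans <| max_le (by rw [totalDegree_one]; omega) <|
    totalDegree_finsetSum_le fun i _ => (totalDegree_X_pow i 2).le

section Line

variable [CommRing R]

def lineDirection (u : σ → R) (i : σ) : Polynomial (MvPolynomial σ R) :=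
  Polynomial.C (X i - C (u i))

/-- `p ↦ p(u + t (X - u))`, a polynomial in `t` with coefficients in `MvPolynomial σ R`. -/
def lineRestriction (u : σ → R) : MvPolynomial σ R →ₐ[R] Polynomial (MvPolynomial σ R) :=
  aeval fun i => Polynomial.C (C (u i)) + lineDirection u i * Polynomial.X

theorem eval_lineRestriction (u : σ → R) (a : MvPolynomial σ R) (p : MvPolynomial σ R) :
    (lineRestriction u p).eval a = aeval (fun i => C (u i) + (X i - C (u i)) * a) p := by
  induction p using MvPolynomial.induction_on with
  | C r => simp [lineRestriction, ← algebraMap_eq]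
  | add p q hp hq => simp [hp, hq]
  | mul_X p i hp =>
    rw [map_mul, Polynomial.eval_mul, hp, map_mul]
    simp [lineRestriction, lineDirection]

theorem eval_one_lineRestriction (u : σ → R) (p : MvPolynomial σ R) :
    (lineRestriction u p).eval 1 = p := by
  simp [eval_lineRestriction]

theorem eval_zero_lineRestriction (u : σ → R) (p : MvPolynomial σ R) :
    (lineRestriction u p).eval 0 = C (eval u p) := by
  simp only [eval_lineRestriction, mul_zero, add_zero]
  rw [eval, coe_eval₂Hom, eval₂_comp_left]
  rfl

theorem totalDegree_X_sub_C_le [Nontrivial R] (i : σ) (c : R) :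
    (X i - C c : MvPolynomial σ R).totalDegree ≤ 1 :=
  (totalDegree_sub _ _).trans (max_le (totalDegree_X i).le (by rw [totalDegree_C]; omega))

theorem totalDegree_eval_C_lineRestriction_le [Nontrivial R] (u : σ → R) (t : R)
    (p : MvPolynomial σ R) : ((lineRestriction u p).eval (C t)).totalDegree ≤ p.totalDegree := by
  rw [eval_lineRestriction]
  refine totalDegree_aeval_le_of_totalDegree_le_one _ (fun i => ?_) p
  refine (totalDegree_add _ _).trans (max_le (by rw [totalDegree_C]; omega) ?_)
  refine (totalDegree_mul _ _).trans ?_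
  rw [totalDegree_C, add_zero]
  exact totalDegree_X_sub_C_le i (u i)

theorem derivative_lineRestriction [Fintype σ] (u : σ → R) (p : MvPolynomial σ R) :
    Polynomial.derivative (lineRestriction u p) =
      ∑ i, lineRestriction u (pderiv i p) * lineDirection u i := by
  classical
  induction p using MvPolynomial.induction_on with
  | C r => simp [lineRestriction, ← algebraMap_eq]
  | add p q hp hq => simp only [map_add, hp, hq, add_mul, Finset.sum_add_distrib]
  | mul_X p i hp =>
    have hX : ∑ j, lineRestriction u (pderiv j (X i)) * lineDirection u j = lineDirection u i := by
      simp [pderiv_X, Pi.single_apply]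
    have hXi : Polynomial.derivative (lineRestriction u (X i)) = lineDirection u i := by
      simp [lineRestriction, lineDirection]
    rw [map_mul, Polynomial.derivative_mul, hp, hXi, ← hX, Finset.sum_mul, Finset.mul_sum,
      ← Finset.sum_add_distrib]
    refine Finset.sum_congr rfl fun j _ => ?_
    rw [pderiv_mul, map_add, map_mul, map_mul]
    ring

end Line

end MvPolynomial

namespace Polynomial

variable {R A : Type*} [CommSemiring R] [CommSemiring A] [Algebra R A]

/-- `φ` applied to every coefficient; `Polynomial.map` needs a ring hom, `φ` is only linear. -/
def mapCoeffs (φ : A →ₗ[R] R) (P : A[X]) : R[X] :=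
  ⟨⟨Finsupp.mapRange φ φ.map_zero P.toFinsupp.coeff⟩⟩

@[simp]
theorem coeff_mapCoeffs (φ : A →ₗ[R] R) (P : A[X]) (k : ℕ) :
    (mapCoeffs φ P).coeff k = φ (P.coeff k) := by
  cases P
  simp [mapCoeffs]

theorem mapCoeffs_derivative (φ : A →ₗ[R] R) (P : A[X]) :
    mapCoeffs φ (derivative P) = derivative (mapCoeffs φ P) := by
  ext k
  simp only [coeff_mapCoeffs, coeff_derivative]
  rw [← Nat.cast_succ, ← Nat.cast_succ, mul_comm, ← nsmul_eq_mul, map_nsmul, nsmul_eq_mul,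
    mul_comm]

theorem eval_mapCoeffs (φ : A →ₗ[R] R) (P : A[X]) (t : R) :
    (mapCoeffs φ P).eval t = φ (P.eval (algebraMap R A t)) := by
  have hdeg : (mapCoeffs φ P).natDegree ≤ P.natDegree :=
    natDegree_le_iff_coeff_eq_zero.mpr fun N hN => by
      rw [coeff_mapCoeffs, coeff_eq_zero_of_natDegree_lt hN, map_zero]
  rw [eval_eq_sum_range' (Nat.lt_succ_of_le hdeg), eval_eq_sum_range, map_sum]
  refine Finset.sum_congr rfl fun k _ => ?_
  rw [← map_pow, ← Algebra.commutes, ← Algebra.smul_def, map_smul, coeff_mapCoeffs, smul_eq_mul,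
    mul_comm]

theorem eval_one_le_eval_zero_add_derivative (h : ℝ[X])
    (h2 : ∀ t, (derivative (derivative h)).eval t ≤ 0) :
    h.eval 1 ≤ h.eval 0 + (derivative h).eval 0 := by
  have hderiv (p : ℝ[X]) :
      deriv (fun t : ℝ => p.eval t) = fun t => (derivative p).eval t := by
    funext t
    exact p.deriv
  have hconc : ConcaveOn ℝ Set.univ fun t => h.eval t := by
    refine concaveOn_univ_of_deriv2_nonpos h.differentiable ?_ fun t => ?_
    · simpa only [hderiv] using (derivative h).differentiable
    · simpa only [Function.iterate_succ, Function.iterate_zero, Function.comp_apply, id,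
        hderiv] using h2 t
  have := hconc.slope_le_of_hasDerivAt (Set.mem_univ 0) (Set.mem_univ 1) one_pos (h.hasDerivAt 0)
  rw [slope_def_field] at this
  linarith

end Polynomial

open Matrix in
theorem Matrix.vecMul_mul_transpose_dotProduct {m n R : Type*} [Fintype m] [Fintype n]
    [CommSemiring R] (A : Matrix m n R) (v : m → R) :
    (v ᵥ* (A * A.transpose)) ⬝ᵥ v = (v ᵥ* A) ⬝ᵥ (v ᵥ* A) := by
  rw [← Matrix.vecMul_vecMul, ← Matrix.dotProduct_mulVec, Matrix.mulVec_transpose]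

theorem LinearMap.apply_C_of_apply_one {σ : Type*} {φ : MvPolynomial σ ℝ →ₗ[ℝ] ℝ} (hφ1 : φ 1 = 1)
    (r : ℝ) : φ (C r) = r := by
  rw [← mul_one (C r), ← smul_eq_C_mul, map_smul, hφ1, smul_eq_mul, mul_one]

section Jensen

variable {d : ℕ}

theorem two_mul_totalDegree_add_two_le_of_neg_polyHessian_eq {G : MvPolynomial (Fin d) ℝ}
    {r : ℕ} {L : Matrix (Fin d) (Fin r) (MvPolynomial (Fin d) ℝ)}
    (hL : -polyHessian G = L * L.transpose) {i : Fin d} {k : Fin r} (hik : L i k ≠ 0) :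
    2 * (L i k).totalDegree + 2 ≤ G.totalDegree := by
  have hdiag : ∑ k, L i k ^ 2 = -pderiv i (pderiv i G) := by
    simpa [polyHessian, Matrix.mul_apply, sq] using (congrFun (congrFun hL i) i).symm
  have hne : pderiv i (pderiv i G) ≠ 0 := fun h0 =>
    hik (eq_zero_of_sum_sq_eq_zero (by rw [hdiag, h0, neg_zero]) k)
  have h1 := totalDegree_pderiv_lt hne
  have h2 := totalDegree_pderiv_lt (i := i) (p := G) fun h0 => hne (by rw [h0, map_zero])
  have h3 := two_mul_totalDegree_le_totalDegree_sum_sq (s := univ) (fun k => L i k) (mem_univ k)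
  rw [hdiag, totalDegree_neg] at h3
  omega

open Matrix in
theorem derivative_derivative_lineRestriction (u : Fin d → ℝ) {G : MvPolynomial (Fin d) ℝ}
    {r : ℕ} {L : Matrix (Fin d) (Fin r) (MvPolynomial (Fin d) ℝ)}
    (hL : -polyHessian G = L * L.transpose) :
    Polynomial.derivative (Polynomial.derivative (lineRestriction u G)) =
      -((lineDirection u ᵥ* L.map (lineRestriction u)) ⬝ᵥ
        (lineDirection u ᵥ* L.map (lineRestriction u))) := by
  have hHL : (polyHessian G).map (lineRestriction u) =
      -(L.map (lineRestriction u) * (L.map (lineRestriction u)).transpose) := by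
    rw [← neg_neg (polyHessian G), hL, Matrix.map_neg _ (map_neg _), Matrix.map_mul,
      Matrix.transpose_map]
  rw [← Matrix.vecMul_mul_transpose_dotProduct, ← neg_dotProduct, ← Matrix.vecMul_neg, ← hHL,
    derivative_lineRestriction, Polynomial.derivative_sum]
  simp only [Polynomial.derivative_mul, lineDirection, Polynomial.derivative_C, mul_zero, add_zero,
    derivative_lineRestriction, dotProduct, Matrix.vecMul, Matrix.map_apply, polyHessian,
    Matrix.of_apply, Finset.sum_mul]
  exact Finset.sum_congr rfl fun i _ => Finset.sum_congr rfl fun j _ => by ring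

theorem apply_le_eval_phiPoint_of_isSOSConcave {n : ℕ} {φ : MvPolynomial (Fin d) ℝ →ₗ[ℝ] ℝ}
    (hφ1 : φ 1 = 1) (hsq : ∀ p : MvPolynomial (Fin d) ℝ, p.totalDegree ≤ n → 0 ≤ φ (p ^ 2))
    {G : MvPolynomial (Fin d) ℝ} (hG : IsSOSConcave G) (hGn : G.totalDegree ≤ 2 * n) :
    φ G ≤ eval (phiPoint φ) G := by
  obtain ⟨r, L, hL⟩ := hG
  set u := phiPoint φ
  set h := (lineRestriction u G).mapCoeffs φ
  have h_one : h.eval 1 = φ G := by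
    rw [Polynomial.eval_mapCoeffs, map_one, eval_one_lineRestriction]
  have h_zero : h.eval 0 = eval u G := by
    rw [Polynomial.eval_mapCoeffs, map_zero, eval_zero_lineRestriction,
      LinearMap.apply_C_of_apply_one hφ1]
  have h_deriv_zero : (Polynomial.derivative h).eval 0 = 0 := by
    rw [← Polynomial.mapCoeffs_derivative, Polynomial.eval_mapCoeffs, map_zero,
      derivative_lineRestriction, Polynomial.eval_finsetSum, map_sum]
    refine Finset.sum_eq_zero fun i _ => ?_
    rw [Polynomial.eval_mul, eval_zero_lineRestriction, lineDirection, Polynomial.eval_C,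
      ← smul_eq_C_mul, map_smul, map_sub, LinearMap.apply_C_of_apply_one hφ1]
    simp [u, phiPoint]
  have h_deriv2 : ∀ t, (Polynomial.derivative (Polynomial.derivative h)).eval t ≤ 0 := by
    intro t
    rw [← Polynomial.mapCoeffs_derivative, ← Polynomial.mapCoeffs_derivative,
      Polynomial.eval_mapCoeffs, derivative_derivative_lineRestriction u hL]
    simp only [dotProduct, Polynomial.eval_neg, Polynomial.eval_finsetSum, map_neg, map_sum,
      neg_nonpos, ← sq, Polynomial.eval_pow]
    -- `2 deg Lᵢₖ + 2 ≤ deg G ≤ 2n` keeps each square within the order-`n` cone.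
    refine Finset.sum_nonneg fun k _ => hsq _ ?_
    simp only [Matrix.vecMul, dotProduct, Matrix.map_apply, Polynomial.eval_finsetSum,
      Polynomial.eval_mul, algebraMap_eq]
    refine totalDegree_finsetSum_le fun i _ => ?_
    rcases eq_or_ne (L i k) 0 with hik | hik
    · simp [hik]
    have hL_deg := two_mul_totalDegree_add_two_le_of_neg_polyHessian_eq hL hik
    have hdir_deg : ((lineDirection u i).eval (C t)).totalDegree ≤ 1 := by
      rw [lineDirection, Polynomial.eval_C]
      exact totalDegree_X_sub_C_le i (u i)
    have := totalDegree_eval_C_lineRestriction_le u t (L i k)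
    exact (totalDegree_mul _ _).trans (by omega)
  simpa [h_one, h_zero, h_deriv_zero] using
    Polynomial.eval_one_le_eval_zero_add_derivative h h_deriv2

end Jensen

section MomentBounds

variable {σ : Type*} {n : ℕ} {ψ : MvPolynomial σ ℝ →ₗ[ℝ] ℝ}

theorem two_mul_abs_apply_mul_le (hsq : ∀ p : MvPolynomial σ ℝ, p.totalDegree ≤ n → 0 ≤ ψ (p ^ 2))
    {a b : MvPolynomial σ ℝ} (ha : a.totalDegree ≤ n) (hb : b.totalDegree ≤ n) :
    2 * |ψ (a * b)| ≤ ψ (a ^ 2) + ψ (b ^ 2) := by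
  have hplus := hsq (a + b) ((totalDegree_add _ _).trans (max_le ha hb))
  have hminus := hsq (a - b) ((totalDegree_sub _ _).trans (max_le ha hb))
  rw [show (a + b) ^ 2 = a ^ 2 + b ^ 2 + (a * b + a * b) by ring, map_add, map_add,
    map_add] at hplus
  rw [show (a - b) ^ 2 = a ^ 2 + b ^ 2 - (a * b + a * b) by ring, map_sub, map_add,
    map_add] at hminus
  cases abs_cases (ψ (a * b)) <;> linarith

variable [Fintype σ]

theorem apply_sq_mul_X_le (hsq : ∀ p : MvPolynomial σ ℝ, p.totalDegree ≤ n → 0 ≤ ψ (p ^ 2))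
    (hball : ∀ p : MvPolynomial σ ℝ, p.totalDegree ≤ n - 1 → 0 ≤ ψ (p ^ 2 * (1 - ∑ i, X i ^ 2)))
    {p : MvPolynomial σ ℝ} (hp : p.totalDegree < n) (i : σ) :
    ψ ((p * X i) ^ 2) ≤ ψ (p ^ 2) := by
  have hdeg (j : σ) : (p * X j).totalDegree ≤ n :=
    (totalDegree_mul _ _).trans (by rw [totalDegree_X]; omega)
  have hsum : ∑ j, ψ ((p * X j) ^ 2) ≤ ψ (p ^ 2) := by
    have := hball p (by omega)
    rwa [mul_sub, mul_one, Finset.mul_sum, map_sub, map_sum, sub_nonneg,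
      Finset.sum_congr rfl fun j _ => by rw [← mul_pow]] at this
  exact (Finset.single_le_sum (fun j _ => hsq _ (hdeg j)) (mem_univ i)).trans hsum

theorem apply_sq_prod_map_X_le_one (hψ1 : ψ 1 = 1)
    (hsq : ∀ p : MvPolynomial σ ℝ, p.totalDegree ≤ n → 0 ≤ ψ (p ^ 2))
    (hball : ∀ p : MvPolynomial σ ℝ, p.totalDegree ≤ n - 1 → 0 ≤ ψ (p ^ 2 * (1 - ∑ i, X i ^ 2)))
    (l : List σ) (hl : l.length ≤ n) : ψ ((l.map X).prod ^ 2) ≤ 1 := by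
  induction l with
  | nil => simp [hψ1]
  | cons i l ih =>
    simp only [List.length_cons] at hl
    rw [List.map_cons, List.prod_cons, mul_comm]
    exact (apply_sq_mul_X_le hsq hball ((totalDegree_prod_map_X_le l).trans_lt hl) i).trans
      (ih (by omega))

theorem abs_apply_prod_map_X_le_one (hψ1 : ψ 1 = 1)
    (hsq : ∀ p : MvPolynomial σ ℝ, p.totalDegree ≤ n → 0 ≤ ψ (p ^ 2))
    (hball : ∀ p : MvPolynomial σ ℝ, p.totalDegree ≤ n - 1 → 0 ≤ ψ (p ^ 2 * (1 - ∑ i, X i ^ 2)))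
    (l : List σ) (hl : l.length ≤ 2 * n) : |ψ ((l.map X).prod)| ≤ 1 := by
  have htake : (l.take n).length ≤ n := List.length_take_le _ _
  have hdrop : (l.drop n).length ≤ n := by rw [List.length_drop]; omega
  have := two_mul_abs_apply_mul_le hsq ((totalDegree_prod_map_X_le _).trans htake)
    ((totalDegree_prod_map_X_le _).trans hdrop)
  rw [← List.prod_append, ← List.map_append, List.take_append_drop] at this
  linarith [apply_sq_prod_map_X_le_one hψ1 hsq hball _ htake,
    apply_sq_prod_map_X_le_one hψ1 hsq hball _ hdrop]

theorem neg_sum_abs_coeff_le_apply (hψ1 : ψ 1 = 1)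
    (hsq : ∀ p : MvPolynomial σ ℝ, p.totalDegree ≤ n → 0 ≤ ψ (p ^ 2))
    (hball : ∀ p : MvPolynomial σ ℝ, p.totalDegree ≤ n - 1 → 0 ≤ ψ (p ^ 2 * (1 - ∑ i, X i ^ 2)))
    {f : MvPolynomial σ ℝ} (hf : f.totalDegree ≤ 2 * n) :
    -∑ α ∈ f.support, |coeff α f| ≤ ψ f := by
  conv_rhs => rw [f.as_sum, map_sum]
  rw [← Finset.sum_neg_distrib]
  refine Finset.sum_le_sum fun α hα => ?_
  obtain ⟨l, hlen, hl⟩ := exists_list_monomial_one_eq_prod_map_X (R := ℝ) α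
  have hbound : |ψ (l.map X).prod| ≤ 1 :=
    abs_apply_prod_map_X_le_one hψ1 hsq hball l (hlen ▸ (le_totalDegree hα).trans hf)
  have hterm : monomial α (coeff α f) = coeff α f • (l.map X).prod := by
    rw [← hl, smul_monomial, smul_eq_mul, mul_one]
  rw [hterm, map_smul, smul_eq_mul]
  have := mul_le_of_le_one_right (abs_nonneg (coeff α f)) hbound
  rw [← abs_mul] at this
  linarith [neg_abs_le (coeff α f * ψ (l.map X).prod)]

end MomentBounds

theorem degHalf_le_iff {d n : ℕ} {p : MvPolynomial (Fin d) ℝ} :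
    degHalf p ≤ n ↔ p.totalDegree ≤ 2 * n := by
  unfold degHalf
  omega

section Feasible

variable {d m n : ℕ} {g : Fin (m + 2) → MvPolynomial (Fin d) ℝ}
  {ψ : MvPolynomial (Fin d) ℝ →ₗ[ℝ] ℝ}

theorem Feasible.apply_nonneg (hψ : Feasible g n ψ) (j : Fin (m + 2)) : 0 ≤ ψ (g j) := by
  simpa using hψ.2 j 1 (by rw [totalDegree_one]; exact Nat.zero_le _)

theorem Feasible.apply_sq_nonneg (hg0 : g 0 = 1) (hψ : Feasible g n ψ)
    {p : MvPolynomial (Fin d) ℝ} (hp : p.totalDegree ≤ n) : 0 ≤ ψ (p ^ 2) := by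
  simpa [hg0] using hψ.2 0 p (by simpa [hg0, degHalf] using hp)

theorem Feasible.apply_sq_mul_one_sub_sum_X_sq_nonneg
    (hgl : g (Fin.last (m + 1)) = 1 - ∑ i, X i ^ 2) (hψ : Feasible g n ψ)
    {p : MvPolynomial (Fin d) ℝ} (hp : p.totalDegree ≤ n - 1) :
    0 ≤ ψ (p ^ 2 * (1 - ∑ i, X i ^ 2)) := by
  have : degHalf (g (Fin.last (m + 1))) ≤ 1 := by
    rw [degHalf_le_iff, hgl]
    exact totalDegree_one_sub_sum_X_sq_le
  simpa [hgl] using hψ.2 (Fin.last (m + 1)) p (by omega)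

theorem feasible_aeval {y : Fin d → ℝ} (hy : y ∈ OmegaSet g) :
    Feasible g n (aeval y).toLinearMap := by
  refine ⟨(aeval y).map_one, fun j p _ => ?_⟩
  simpa using mul_nonneg (sq_nonneg (eval y p)) (hy j)

end Feasible

section Relaxation

variable {d m : ℕ} {g : Fin (m + 2) → MvPolynomial (Fin d) ℝ} {f : MvPolynomial (Fin d) ℝ}
  {n : ℕ}

theorem degHalf_le_nMin_left : degHalf f ≤ nMin g f :=
  le_max_left _ _

theorem degHalf_le_nMin {j : Fin (m + 2)} (hj : j ≠ 0) : degHalf (g j) ≤ nMin g f :=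
  (Finset.le_sup (f := fun j => degHalf (g j)) (Finset.mem_erase.mpr ⟨hj, mem_univ j⟩)).trans
    (le_max_right _ _)

theorem bddBelow_feasible_apply (hg : GoodConstraints g) (hf : f.totalDegree ≤ 2 * n) :
    BddBelow {r : ℝ | ∃ ψ : MvPolynomial (Fin d) ℝ →ₗ[ℝ] ℝ, Feasible g n ψ ∧ ψ f = r} := by
  refine ⟨-∑ α ∈ f.support, |coeff α f|, ?_⟩
  rintro _ ⟨ψ, hψ, rfl⟩
  exact neg_sum_abs_coeff_le_apply hψ.1 (fun _ => hψ.apply_sq_nonneg hg.1)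
    (fun _ => hψ.apply_sq_mul_one_sub_sum_X_sq_nonneg hg.2.1) hf

theorem rho_le_eval (hg : GoodConstraints g) (hf : f.totalDegree ≤ 2 * n) {y : Fin d → ℝ}
    (hy : y ∈ OmegaSet g) : rho g f n ≤ eval y f :=
  csInf_le (bddBelow_feasible_apply hg hf) ⟨_, feasible_aeval hy, by simp⟩

theorem Feasible.phiPoint_mem_omegaSet (hg : GoodConstraints g) {φ : MvPolynomial (Fin d) ℝ →ₗ[ℝ] ℝ}
    (hφ : Feasible g n φ) (hdeg : ∀ j, j ≠ 0 → (g j).totalDegree ≤ 2 * n) :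
    phiPoint φ ∈ OmegaSet g := by
  intro j
  rcases eq_or_ne j 0 with rfl | hj
  · simp [hg.1]
  exact (hφ.apply_nonneg j).trans <| apply_le_eval_phiPoint_of_isSOSConcave hφ.1
    (fun _ => hφ.apply_sq_nonneg hg.1) (hg.2.2 j hj) (hdeg j hj)

end Relaxation

theorem exactness_certificate_general {d m : ℕ}
    (g : Fin (m + 2) → MvPolynomial (Fin d) ℝ) (hg : GoodConstraints g)
    (f : MvPolynomial (Fin d) ℝ)
    (n : ℕ) (hn : nMin g f ≤ n)
    (φ : MvPolynomial (Fin d) ℝ →ₗ[ℝ] ℝ) (hφ : Feasible g n φ)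
    (hle : eval (phiPoint φ) f ≤ rho g f n) :
    rho g f n = fstar g f ∧ phiPoint φ ∈ OmegaSet g ∧
      ∀ y ∈ OmegaSet g, eval (phiPoint φ) f ≤ eval y f := by
  have hf : f.totalDegree ≤ 2 * n := degHalf_le_iff.mp (degHalf_le_nMin_left.trans hn)
  have hmem : phiPoint φ ∈ OmegaSet g :=
    hφ.phiPoint_mem_omegaSet hg fun j hj => degHalf_le_iff.mp ((degHalf_le_nMin hj).trans hn)
  have hrho : ∀ y ∈ OmegaSet g, rho g f n ≤ eval y f := fun y hy => rho_le_eval hg hf hy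
  have hfstar : fstar g f ≤ eval (phiPoint φ) f :=
    csInf_le ⟨rho g f n, Set.forall_mem_image.mpr hrho⟩ ⟨_, hmem, rfl⟩
  have hrho_fstar : rho g f n ≤ fstar g f :=
    le_csInf ⟨_, _, hmem, rfl⟩ (Set.forall_mem_image.mpr hrho)
  exact ⟨le_antisymm hrho_fstar (hfstar.trans hle), hmem, fun y hy => hle.trans (hrho y hy)⟩

/-- If `n ≥ n_min`, `φ*` is feasible at order `n` with `φ*(f) = ρₙ`, and
`f(φ*(x)) ≤ ρₙ`, then `ρₙ = f*` and `x* = φ*(x) ∈ Ω` is a global minimizer of `f` on `Ω`. -/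
theorem exactness_certificate {d m : ℕ}
    (g : Fin (m + 2) → MvPolynomial (Fin d) ℝ) (hg : GoodConstraints g)
    (hΩ : (OmegaSet g).Nonempty)
    (f : MvPolynomial (Fin d) ℝ)
    (n : ℕ) (hn : nMin g f ≤ n)
    (φ : MvPolynomial (Fin d) ℝ →ₗ[ℝ] ℝ) (hφ : Feasible g n φ)
    (hatt : φ f = rho g f n)
    (hle : eval (phiPoint φ) f ≤ rho g f n) :
    rho g f n = fstar g f ∧ phiPoint φ ∈ OmegaSet g ∧
      ∀ y ∈ OmegaSet g, eval (phiPoint φ) f ≤ eval y f :=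
  exactness_certificate_general g hg f n hn φ hφ hle
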